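/- For every numerical semigroup Λ of genus g ≥ 1 with k effective generators, the k children of Λ have, respectively, k − 1, k − 2, ..., 1, 0 weak generators. Consequently, the number of genus-g semigroups having exactly h weak generators equals Σ_{k > h} t(g−1, k), where t(g, h) is the number of numerical semigroups of genus g and efficacy h. -/

import Mathlib

/-- A numerical semigroup: a set of nonnegative integers containing 0, closed under
addition, with finite complement. -/
def IsNumericalSemigroup (Λ : Set ℕ) : Prop :=
  0 ∈ Λ ∧ (∀ a ∈ Λ, ∀ b ∈ Λ, a + b ∈ Λ) ∧ Λᶜ.Finite

/-- The Frobenius number: the largest nonnegative integer not in `Λ`. -/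
noncomputable def frob (Λ : Set ℕ) : ℕ := sSup Λᶜ

/-- The genus: the number of gaps of `Λ`. -/
noncomputable def genus (Λ : Set ℕ) : ℕ := Λᶜ.ncard

/-- `x` is an effective generator of `Λ`: `x > f(Λ)` and `Λ \ {x}` is closed under
addition. -/
def EffGen (Λ : Set ℕ) (x : ℕ) : Prop :=
  frob Λ < x ∧ ∀ a ∈ Λ \ {x}, ∀ b ∈ Λ \ {x}, a + b ∈ Λ \ {x}

/-- The efficacy: the number of effective generators of `Λ`. -/
noncomputable def efficacy (Λ : Set ℕ) : ℕ := {x : ℕ | EffGen Λ x}.ncard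

/-- The number of weak generators of `Λ`: effective generators of the parent
`P(Λ) = Λ ∪ {f(Λ)}` that exceed `f(Λ)`. -/
noncomputable def weakCount (Λ : Set ℕ) : ℕ :=
  {x : ℕ | frob Λ < x ∧ EffGen (Λ ∪ {frob Λ}) x}.ncard

/-- The number of numerical semigroups of genus `g` and efficacy `h`. -/
noncomputable def t (g h : ℕ) : ℕ :=
  {Λ : Set ℕ | IsNumericalSemigroup Λ ∧ genus Λ = g ∧ efficacy Λ = h}.ncard

open Set

section Lemmas

variable {Λ : Set ℕ}

lemma ns_mem_of_frob_lt (hΛ : IsNumericalSemigroup Λ) {n : ℕ} (h : frob Λ < n) :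
    n ∈ Λ := by
  by_contra hn
  exact absurd (le_csSup hΛ.2.2.bddAbove hn) (not_le.2 h)

lemma frob_not_mem (hΛ : IsNumericalSemigroup Λ) (hne : Λᶜ.Nonempty) : frob Λ ∉ Λ :=
  hne.csSup_mem hΛ.2.2

lemma effGen_pos {x : ℕ} (hx : EffGen Λ x) : 0 < x :=
  lt_of_le_of_lt (Nat.zero_le _) hx.1

lemma effGen_mem (hΛ : IsNumericalSemigroup Λ) {x : ℕ} (hx : EffGen Λ x) : x ∈ Λ :=
  ns_mem_of_frob_lt hΛ hx.1

lemma child_compl {x : ℕ} : (Λ \ {x})ᶜ = Λᶜ ∪ {x} := by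
  rw [Set.diff_eq, Set.compl_inter, compl_compl]

lemma child_ns (hΛ : IsNumericalSemigroup Λ) {x : ℕ} (hx : EffGen Λ x) :
    IsNumericalSemigroup (Λ \ {x}) := by
  refine ⟨⟨hΛ.1, fun h => (effGen_pos hx).ne' (Set.mem_singleton_iff.1 h).symm⟩, hx.2, ?_⟩
  rw [child_compl]
  exact hΛ.2.2.union (finite_singleton x)

lemma frob_child (hΛ : IsNumericalSemigroup Λ) {x : ℕ} (hx : EffGen Λ x) :
    frob (Λ \ {x}) = x := by
  rw [frob, child_compl]
  apply IsGreatest.csSup_eq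
  constructor
  · exact Or.inr rfl
  · rintro y (hy | rfl)
    · exact le_of_lt (lt_of_le_of_lt (le_csSup hΛ.2.2.bddAbove hy) hx.1)
    · exact le_refl _

lemma child_union (hΛ : IsNumericalSemigroup Λ) {x : ℕ} (hx : EffGen Λ x) :
    (Λ \ {x}) ∪ {x} = Λ := by
  rw [Set.diff_union_self]
  exact Set.union_eq_self_of_subset_right (by simpa using effGen_mem hΛ hx)

lemma weakCount_child (hΛ : IsNumericalSemigroup Λ) {x : ℕ} (hx : EffGen Λ x) :
    weakCount (Λ \ {x}) = {y : ℕ | x < y ∧ EffGen Λ y}.ncard := by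
  unfold weakCount
  rw [frob_child hΛ hx, child_union hΛ hx]

lemma effGen_bound (hΛ : IsNumericalSemigroup Λ) :
    ∃ m : ℕ, 0 < m ∧ {x : ℕ | EffGen Λ x} ⊆ Set.Ioc (frob Λ) (frob Λ + m) ∧
      Set.Ioo 0 m ⊆ Λᶜ := by
  classical
  have hTne : {n : ℕ | n ∈ Λ ∧ 0 < n}.Nonempty :=
    ⟨frob Λ + 1, ns_mem_of_frob_lt hΛ (by omega), by omega⟩
  obtain ⟨hmΛ, hmpos⟩ := Nat.sInf_mem hTne
  set m := sInf {n : ℕ | n ∈ Λ ∧ 0 < n} with hm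
  refine ⟨m, hmpos, ?_, ?_⟩
  · rintro x hx
    refine ⟨hx.1, ?_⟩
    by_contra hgt
    push_neg at hgt
    have hgt' : frob Λ + m < x := hgt
    have h1 : m ∈ Λ \ {x} := ⟨hmΛ, by simp only [Set.mem_singleton_iff]; omega⟩
    have h2 : x - m ∈ Λ \ {x} := by
      refine ⟨ns_mem_of_frob_lt hΛ (by omega), ?_⟩
      simp only [Set.mem_singleton_iff]; omega
    have h3 := hx.2 m h1 (x - m) h2
    have hxx : m + (x - m) = x := by omega
    rw [hxx] at h3
    exact h3.2 rfl
  · intro n hn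
    simp only [mem_Ioo] at hn
    intro hnΛ
    have hmem : n ∈ {n : ℕ | n ∈ Λ ∧ 0 < n} := ⟨hnΛ, hn.1⟩
    have := Nat.sInf_le hmem
    omega

lemma effGen_finite (hΛ : IsNumericalSemigroup Λ) : {x : ℕ | EffGen Λ x}.Finite := by
  obtain ⟨m, _, hsub, _⟩ := effGen_bound hΛ
  exact (Set.finite_Ioc _ _).subset hsub

lemma efficacy_le (hΛ : IsNumericalSemigroup Λ) : efficacy Λ ≤ genus Λ + 1 := by
  obtain ⟨m, hm, hsub, hgap⟩ := effGen_bound hΛ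
  have h1 : efficacy Λ ≤ (Set.Ioc (frob Λ) (frob Λ + m)).ncard :=
    Set.ncard_le_ncard hsub (Set.finite_Ioc _ _)
  have h2 : (Set.Ioc (frob Λ) (frob Λ + m)).ncard = m := by
    rw [← Finset.coe_Ioc, Set.ncard_coe_finset, Nat.card_Ioc]; omega
  have h3 : (Set.Ioo (0:ℕ) m).ncard ≤ genus Λ :=
    Set.ncard_le_ncard hgap hΛ.2.2
  have h4 : (Set.Ioo (0:ℕ) m).ncard = m - 1 := by
    rw [← Finset.coe_Ioo, Set.ncard_coe_finset, Nat.card_Ioo]; omega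
  omega

lemma gap_lt_two_genus (hΛ : IsNumericalSemigroup Λ) {n : ℕ} (hn : n ∉ Λ) :
    n < 2 * genus Λ := by
  classical
  have hfin := hΛ.2.2
  set f : ℕ → ℕ := fun i => if i ∈ Λ then n - i else i with hf
  have hmaps : ∀ i ∈ Finset.range (n / 2 + 1), f i ∈ hfin.toFinset := by
    intro i hi
    rw [Finset.mem_range] at hi
    rw [Set.Finite.mem_toFinset]
    by_cases h : i ∈ Λ
    · simp only [hf, if_pos h]
      intro hni
      have := hΛ.2.1 i h (n - i) hni
      have hin : i + (n - i) = n := by omega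
      rw [hin] at this
      exact hn this
    · simp only [hf, if_neg h]
      exact h
  have hinj : Set.InjOn f (Finset.range (n / 2 + 1)) := by
    intro i hi j hj hij
    simp only [Finset.coe_range, Set.mem_Iio] at hi hj
    by_cases h1 : i ∈ Λ <;> by_cases h2 : j ∈ Λ <;>
      simp only [hf, if_pos, if_neg, h1, h2, if_true, if_false] at hij
    · omega
    · exfalso
      have : i = j := by omega
      rw [this] at h1; exact h2 h1
    · exfalso
      have : i = j := by omega
      rw [this] at h1; exact h1 h2
    · exact hij
  have hcard := Finset.card_le_card_of_injOn f hmaps hinj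
  rw [Finset.card_range] at hcard
  have : hfin.toFinset.card = genus Λ := by
    rw [genus, Set.ncard_eq_toFinset_card _ hfin]
  omega

lemma finite_genus (g : ℕ) :
    {Λ : Set ℕ | IsNumericalSemigroup Λ ∧ genus Λ = g}.Finite := by
  have h1 : (Set.Iio (2 * g) : Set ℕ).Finite := Set.finite_Iio _
  have h2 := h1.finite_subsets
  have hsub : {Λ : Set ℕ | IsNumericalSemigroup Λ ∧ genus Λ = g} ⊆
      compl ⁻¹' {s : Set ℕ | s ⊆ Set.Iio (2 * g)} := by
    rintro Λ ⟨hΛ, hg⟩ n hn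
    exact Set.mem_Iio.2 (hg ▸ gap_lt_two_genus hΛ hn)
  exact (Set.Finite.preimage (compl_injective.injOn) h2).subset hsub

lemma exists_unique_rank (S : Finset ℕ) {j : ℕ} (hj : j < S.card) :
    ∃! x, x ∈ S ∧ (S.filter (fun y => x < y)).card = j := by
  classical
  set f : ℕ → ℕ := fun x => (S.filter (fun y => x < y)).card with hf
  have hanti : ∀ x ∈ S, ∀ x' ∈ S, x < x' → f x' < f x := by
    intro x hx x' hx' hlt
    have hsub : insert x' (S.filter (fun y => x' < y)) ⊆ S.filter (fun y => x < y) := by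
      intro y hy
      rcases Finset.mem_insert.1 hy with rfl | hy
      · exact Finset.mem_filter.2 ⟨hx', hlt⟩
      · obtain ⟨h1, h2⟩ := Finset.mem_filter.1 hy
        exact Finset.mem_filter.2 ⟨h1, lt_trans hlt h2⟩
    have hc := Finset.card_le_card hsub
    rw [Finset.card_insert_of_notMem (by simp)] at hc
    exact hc
  have hinj : Set.InjOn f S := by
    intro a ha b hb hab
    by_contra hne
    rcases lt_or_gt_of_ne hne with h | h
    · have := hanti a ha b hb h; omega
    · have := hanti b hb a ha h; omega
  have hrange : ∀ x ∈ S, f x < S.card := by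
    intro x hx
    have hsub : S.filter (fun y => x < y) ⊆ S.erase x := by
      intro y hy
      obtain ⟨h1, h2⟩ := Finset.mem_filter.1 hy
      exact Finset.mem_erase.2 ⟨(ne_of_gt h2), h1⟩
    calc f x ≤ (S.erase x).card := Finset.card_le_card hsub
      _ < S.card := Finset.card_erase_lt_of_mem hx
  have himg : S.image f = Finset.range S.card := by
    apply Finset.eq_of_subset_of_card_le
    · intro y hy
      obtain ⟨x, hx, rfl⟩ := Finset.mem_image.1 hy
      exact Finset.mem_range.2 (hrange x hx)
    · rw [Finset.card_range, Finset.card_image_of_injOn hinj]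
  have hj' : j ∈ S.image f := by rw [himg]; exact Finset.mem_range.2 hj
  obtain ⟨x, hx, hfx⟩ := Finset.mem_image.1 hj'
  refine ⟨x, ⟨hx, hfx⟩, ?_⟩
  rintro y ⟨hy, hfy⟩
  exact hinj hy hx (hfy.trans hfx.symm)

lemma part1 (hΛ : IsNumericalSemigroup Λ) {j : ℕ} (hj : j < efficacy Λ) :
    ∃! x : ℕ, EffGen Λ x ∧ weakCount (Λ \ {x}) = j := by
  classical
  have hfin := effGen_finite hΛ
  set S := hfin.toFinset with hS
  have hcard : S.card = efficacy Λ := by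
    rw [efficacy, Set.ncard_eq_toFinset_card _ hfin]
  have key : ∀ x : ℕ, EffGen Λ x →
      weakCount (Λ \ {x}) = (S.filter (fun y => x < y)).card := by
    intro x hx
    rw [weakCount_child hΛ hx]
    have hset : {y : ℕ | x < y ∧ EffGen Λ y} = ↑(S.filter (fun y => x < y)) := by
      ext y
      simp only [Set.mem_setOf_eq, Finset.coe_filter, hS, Set.Finite.mem_toFinset]
      constructor
      · rintro ⟨h1, h2⟩; exact ⟨h2, h1⟩
      · rintro ⟨h1, h2⟩; exact ⟨h2, h1⟩
    rw [hset, Set.ncard_coe_finset]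
  obtain ⟨x, ⟨hxS, hxc⟩, huniq⟩ := exists_unique_rank S (by rw [hcard]; exact hj)
  have hxe : EffGen Λ x := hfin.mem_toFinset.1 hxS
  refine ⟨x, ⟨hxe, (key x hxe).trans hxc⟩, ?_⟩
  rintro y ⟨hy, hyc⟩
  exact huniq y ⟨hfin.mem_toFinset.2 hy, (key y hy).symm.trans hyc⟩

end Lemmas
section Parent

variable {Λ' : Set ℕ}

lemma frob_pos (hΛ' : IsNumericalSemigroup Λ') (hne : Λ'ᶜ.Nonempty) :
    0 < frob Λ' := by
  rcases Nat.eq_zero_or_pos (frob Λ') with h | h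
  · exact absurd (h ▸ hΛ'.1) (frob_not_mem hΛ' hne)
  · exact h

lemma parent_ns (hΛ' : IsNumericalSemigroup Λ') (hne : Λ'ᶜ.Nonempty) :
    IsNumericalSemigroup (Λ' ∪ {frob Λ'}) := by
  refine ⟨Or.inl hΛ'.1, ?_, ?_⟩
  · intro a ha b hb
    rcases lt_or_ge (frob Λ') (a + b) with h | h
    · exact Or.inl (ns_mem_of_frob_lt hΛ' h)
    · rcases ha with ha | ha
      · rcases hb with hb | hb
        · exact Or.inl (hΛ'.2.1 a ha b hb)
        · right
          simp only [Set.mem_singleton_iff] at hb ⊢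
          omega
      · right
        simp only [Set.mem_singleton_iff] at ha ⊢
        omega
  · refine hΛ'.2.2.subset ?_
    rw [Set.compl_union]
    exact Set.inter_subset_left

lemma parent_diff (hΛ' : IsNumericalSemigroup Λ') (hne : Λ'ᶜ.Nonempty) :
    (Λ' ∪ {frob Λ'}) \ {frob Λ'} = Λ' := by
  ext n
  simp only [Set.mem_diff, Set.mem_union, Set.mem_singleton_iff]
  constructor
  · rintro ⟨h1 | h1, h2⟩
    · exact h1
    · exact absurd h1 h2
  · intro h
    exact ⟨Or.inl h, fun he => frob_not_mem hΛ' hne (he ▸ h)⟩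

lemma frob_parent_lt (hΛ' : IsNumericalSemigroup Λ') (hne : Λ'ᶜ.Nonempty) :
    frob (Λ' ∪ {frob Λ'}) < frob Λ' := by
  have hF1 := frob_pos hΛ' hne
  have hc : (Λ' ∪ {frob Λ'})ᶜ = Λ'ᶜ ∩ {frob Λ'}ᶜ := Set.compl_union _ _
  rw [frob, hc]
  rcases Set.eq_empty_or_nonempty (Λ'ᶜ ∩ {frob Λ'}ᶜ) with h | h
  · rw [h]
    simpa using hF1
  · have hfin : (Λ'ᶜ ∩ {frob Λ'}ᶜ).Finite := hΛ'.2.2.subset Set.inter_subset_left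
    obtain ⟨h1, h2⟩ := h.csSup_mem hfin
    exact lt_of_le_of_ne (le_csSup hΛ'.2.2.bddAbove h1) h2

lemma effGen_parent (hΛ' : IsNumericalSemigroup Λ') (hne : Λ'ᶜ.Nonempty) :
    EffGen (Λ' ∪ {frob Λ'}) (frob Λ') := by
  refine ⟨frob_parent_lt hΛ' hne, ?_⟩
  rw [parent_diff hΛ' hne]
  exact hΛ'.2.1

lemma genus_parent (hΛ' : IsNumericalSemigroup Λ') (hne : Λ'ᶜ.Nonempty) :
    genus (Λ' ∪ {frob Λ'}) + 1 = genus Λ' := by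
  have hc : (Λ' ∪ {frob Λ'})ᶜ = Λ'ᶜ \ {frob Λ'} := by
    rw [Set.compl_union]
    rfl
  rw [genus, genus, hc]
  exact Set.ncard_diff_singleton_add_one (hne.csSup_mem hΛ'.2.2) hΛ'.2.2

lemma genus_child {Λ : Set ℕ} (hΛ : IsNumericalSemigroup Λ) {x : ℕ}
    (hx : EffGen Λ x) : genus (Λ \ {x}) = genus Λ + 1 := by
  rw [genus, genus, child_compl, Set.union_singleton,
    Set.ncard_insert_of_notMem (by simp [effGen_mem hΛ hx]) hΛ.2.2]
end Parent

lemma part2 (g h : ℕ) (hg : 1 ≤ g) :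
    {Λ : Set ℕ | IsNumericalSemigroup Λ ∧ genus Λ = g ∧ weakCount Λ = h}.ncard =
      ∑' k : ℕ, if h < k then t (g - 1) k else 0 := by
  classical
  set A := {Λ : Set ℕ | IsNumericalSemigroup Λ ∧ genus Λ = g ∧ weakCount Λ = h} with hA
  set U := {P : Set ℕ | IsNumericalSemigroup P ∧ genus P = g - 1 ∧ h < efficacy P} with hU
  set φ : Set ℕ → Set ℕ := fun Λ' => Λ' ∪ {frob Λ'} with hφ
  have hAne : ∀ Λ' ∈ A, Λ'ᶜ.Nonempty := by
    intro Λ' hΛ'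
    apply Set.nonempty_of_ncard_ne_zero
    have hgΛ : genus Λ' = g := hΛ'.2.1
    rw [genus] at hgΛ
    omega
  have hwc : ∀ Λ' ∈ A, weakCount Λ' < efficacy (φ Λ') := by
    intro Λ' hΛ'
    have hne := hAne Λ' hΛ'
    have hPns := parent_ns hΛ'.1 hne
    have hPfin := effGen_finite hPns
    have hFmem : frob Λ' ∈ {x : ℕ | EffGen (φ Λ') x} := effGen_parent hΛ'.1 hne
    have hsub : {x : ℕ | frob Λ' < x ∧ EffGen (Λ' ∪ {frob Λ'}) x} ⊆
        {x : ℕ | EffGen (φ Λ') x} \ {frob Λ'} := by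
      rintro x ⟨h1, h2⟩
      exact ⟨h2, by simp only [Set.mem_singleton_iff]; omega⟩
    calc weakCount Λ' ≤ ({x : ℕ | EffGen (φ Λ') x} \ {frob Λ'}).ncard :=
          Set.ncard_le_ncard hsub (hPfin.subset Set.diff_subset)
      _ < {x : ℕ | EffGen (φ Λ') x}.ncard := by
          rw [Set.ncard_diff_singleton_of_mem hFmem]
          have hpos : 0 < {x : ℕ | EffGen (φ Λ') x}.ncard :=
            Set.ncard_pos hPfin |>.2 ⟨_, hFmem⟩
          omega
      _ = efficacy (φ Λ') := rfl
  have hmaps : ∀ Λ' ∈ A, φ Λ' ∈ U := by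
    intro Λ' hΛ'
    have hne := hAne Λ' hΛ'
    refine ⟨parent_ns hΛ'.1 hne, ?_, ?_⟩
    · show genus (Λ' ∪ {frob Λ'}) = g - 1
      have := genus_parent hΛ'.1 hne
      have hgΛ : genus Λ' = g := hΛ'.2.1
      omega
    · have := hwc Λ' hΛ'
      rw [hΛ'.2.2] at this
      exact this
  have hinj : Set.InjOn φ A := by
    intro Λ1 h1 Λ2 h2 heq
    have hne1 := hAne Λ1 h1
    have hne2 := hAne Λ2 h2
    have hPns : IsNumericalSemigroup (φ Λ1) := parent_ns h1.1 hne1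
    have e1 : EffGen (φ Λ1) (frob Λ1) := effGen_parent h1.1 hne1
    have e2 : EffGen (φ Λ1) (frob Λ2) := heq ▸ effGen_parent h2.1 hne2
    have d1 : (φ Λ1) \ {frob Λ1} = Λ1 := parent_diff h1.1 hne1
    have d2 : (φ Λ1) \ {frob Λ2} = Λ2 := by
      rw [heq]; exact parent_diff h2.1 hne2
    have hcard : h < efficacy (φ Λ1) := by
      have := hwc Λ1 h1
      rwa [h1.2.2] at this
    obtain ⟨x, -, huniq⟩ := part1 hPns hcard
    have q1 : frob Λ1 = x := huniq _ ⟨e1, by rw [d1]; exact h1.2.2⟩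
    have q2 : frob Λ2 = x := huniq _ ⟨e2, by rw [d2]; exact h2.2.2⟩
    rw [← d1, ← d2, q1, q2]
  have himg : φ '' A = U := by
    apply Set.Subset.antisymm
    · rintro _ ⟨Λ', hΛ', rfl⟩
      exact hmaps Λ' hΛ'
    · rintro P ⟨hPns, hPg, hPe⟩
      obtain ⟨x, ⟨hx, hwx⟩, -⟩ := part1 hPns hPe
      refine ⟨P \ {x}, ⟨child_ns hPns hx, ?_, hwx⟩, ?_⟩
      · rw [genus_child hPns hx, hPg]
        omega
      · show (P \ {x}) ∪ {frob (P \ {x})} = P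
        rw [frob_child hPns hx, child_union hPns hx]
  have hcardeq : A.ncard = U.ncard := by
    rw [← himg, Set.ncard_image_of_injOn hinj]
  rw [hcardeq]
  have hGfin := finite_genus (g - 1)
  set s : Finset (Set ℕ) := hGfin.toFinset.filter (fun P => h < efficacy P) with hs
  have hUs : U = ↑s := by
    ext P
    simp only [hU, hs, Finset.coe_filter, Set.Finite.mem_toFinset, Set.mem_setOf_eq]
    tauto
  rw [hUs, Set.ncard_coe_finset]
  have hempty : ∀ k, g + 1 ≤ k → t (g - 1) k = 0 := by
    intro k hk
    have he : {Λ : Set ℕ | IsNumericalSemigroup Λ ∧ genus Λ = g - 1 ∧ efficacy Λ = k} = ∅ := by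
      ext P
      simp only [Set.mem_setOf_eq, Set.mem_empty_iff_false, iff_false]
      rintro ⟨hPns, hPg, hPe⟩
      have := efficacy_le hPns
      omega
    rw [t, he, Set.ncard_empty]
  have hside : ∀ k ∉ Finset.range (g + 1), (if h < k then t (g - 1) k else 0) = 0 := by
    intro k hk
    rw [Finset.mem_range, not_lt] at hk
    split_ifs
    · exact hempty k hk
    · rfl
  rw [tsum_eq_sum hside]
  rw [Finset.card_eq_sum_card_fiberwise (f := efficacy) (t := Finset.range (g + 1))
    (fun P hP => by
      have hPG := Finset.mem_filter.1 hP |>.1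
      rw [Set.Finite.mem_toFinset] at hPG
      have h1 := efficacy_le hPG.1
      have h2 := hPG.2
      rw [Finset.coe_range, Set.mem_Iio]
      omega)]
  apply Finset.sum_congr rfl
  intro k hk
  by_cases hhk : h < k
  · rw [if_pos hhk]
    have hTfin : {Λ : Set ℕ | IsNumericalSemigroup Λ ∧ genus Λ = g - 1 ∧ efficacy Λ = k}.Finite :=
      hGfin.subset (fun P hP => ⟨hP.1, hP.2.1⟩)
    rw [t, Set.ncard_eq_toFinset_card _ hTfin]
    congr 1
    ext P
    simp only [Finset.mem_filter, hs, Set.Finite.mem_toFinset, Set.mem_setOf_eq]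
    constructor
    · rintro ⟨⟨⟨hn, hg'⟩, -⟩, he⟩
      exact ⟨hn, hg', he⟩
    · rintro ⟨hn, hg', he⟩
      exact ⟨⟨⟨hn, hg'⟩, by omega⟩, he⟩
  · rw [if_neg hhk, Finset.card_eq_zero, Finset.filter_eq_empty_iff]
    intro P hP
    have := Finset.mem_filter.1 hP |>.2
    omega

/-- For a numerical semigroup `Λ` of genus `g ≥ 1` with `k` effective generators, its
`k` children have, respectively, `k-1, k-2, ..., 1, 0` weak generators (for each
`j < k` there is exactly one child with `j` weak generators). Consequently, the number
of genus-`g` semigroups having exactly `h` weak generators equals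
`Σ_{k > h} t (g-1) k`. -/
theorem children_weak_generators :
    (∀ Λ : Set ℕ, IsNumericalSemigroup Λ → 1 ≤ genus Λ →
      ∀ j < efficacy Λ, ∃! x : ℕ, EffGen Λ x ∧ weakCount (Λ \ {x}) = j) ∧
    (∀ g h : ℕ, 1 ≤ g →
      {Λ : Set ℕ | IsNumericalSemigroup Λ ∧ genus Λ = g ∧ weakCount Λ = h}.ncard =
        ∑' k : ℕ, if h < k then t (g - 1) k else 0) := by
  exact ⟨fun Λ hΛ _ j hj => part1 hΛ hj, fun g h hg => part2 g h hg⟩
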